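/- arXiv:1904.07644 — 5 statements merged into one kernel-verified Lean document; each statement's English description precedes it below -/
import Mathlib

section
/- If u is strictly submodular (u_{12} < 0 everywhere), then for 0 ≤ y1 < y2, any maximizer of x ↦ u(x,y2) - kx is strictly smaller than any maximizer of x ↦ u(x,y1) - kx, provided both maximizers are interior (positive). -/
/-! At an interior maximizer of `x ↦ u(x,y) - kx` the first-order condition `u₁(x,y) = k` holds.
Raising `y` lowers the marginal `u₁`, and since `u₁` is strictly decreasing in `x`, the marginal
can only climb back up to `k` at a smaller `x`. -/

theorem HasDerivAt.eq_of_isMaxOn_sub_mul {g : ℝ → ℝ} {g' k x : ℝ} {s : Set ℝ}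
    (hg : HasDerivAt g g' x) (hmax : IsMaxOn (fun t => g t - k * t) s x) (hs : s ∈ nhds x) :
    g' = k := by
  have hd : HasDerivAt (fun t => g t - k * t) (g' - k) x :=
    hg.sub (by simpa using (hasDerivAt_id' x).const_mul k)
  have := (hmax.isLocalMax hs).hasDerivAt_eq_zero hd
  linarith

theorem StrictAnti.lt_of_eq_of_lt {α β : Type*} [LinearOrder α] [Preorder β] {f g : α → β}
    {x₁ x₂ : α} (hf : StrictAnti f) (heq : f x₁ = g x₂) (hlt : g x₂ < f x₂) : x₂ < x₁ := by
  by_contra! hle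
  exact (hlt.trans_le (hf.antitone hle)).ne heq.symm

theorem stmt_1_general (u u1 : ℝ → ℝ → ℝ) (k : ℝ)
    (hderiv : ∀ y x, HasDerivAt (fun t => u t y) (u1 x y) x)
    (h11 : ∀ y, StrictAnti (fun x => u1 x y))
    (h12 : ∀ x, StrictAnti (fun y => u1 x y))
    (y1 y2 : ℝ) (hy : y1 < y2)
    (x1 x2 : ℝ) (hx1 : 0 < x1) (hx2 : 0 < x2)
    (hmax1 : IsMaxOn (fun x => u x y1 - k * x) (Set.Ici 0) x1)
    (hmax2 : IsMaxOn (fun x => u x y2 - k * x) (Set.Ici 0) x2) :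
    x2 < x1 := by
  have foc1 : u1 x1 y1 = k := (hderiv y1 x1).eq_of_isMaxOn_sub_mul hmax1 (Ici_mem_nhds hx1)
  have foc2 : u1 x2 y2 = k := (hderiv y2 x2).eq_of_isMaxOn_sub_mul hmax2 (Ici_mem_nhds hx2)
  exact (h11 y1).lt_of_eq_of_lt (g := fun x => u1 x y2) (foc1.trans foc2.symm) (h12 x2 hy)

/-- If u is strictly submodular (u₁ strictly decreasing in y, i.e. u_{12} < 0),
u₁ strictly decreasing in x (strict concavity), and u₁ is the x-partial derivative of u,
then for 0 ≤ y1 < y2, any interior (positive) maximizer of x ↦ u(x,y2) - kx is strictly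
smaller than any interior maximizer of x ↦ u(x,y1) - kx. -/
theorem stmt_1 (u u1 : ℝ → ℝ → ℝ) (k : ℝ) (hk : 0 < k)
    (hderiv : ∀ y x, HasDerivAt (fun t => u t y) (u1 x y) x)
    (h11 : ∀ y, StrictAnti (fun x => u1 x y))
    (h12 : ∀ x, StrictAnti (fun y => u1 x y))
    (y1 y2 : ℝ) (hy1 : 0 ≤ y1) (hy : y1 < y2)
    (x1 x2 : ℝ) (hx1 : 0 < x1) (hx2 : 0 < x2)
    (hmax1 : IsMaxOn (fun x => u x y1 - k * x) (Set.Ici 0) x1)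
    (hmax2 : IsMaxOn (fun x => u x y2 - k * x) (Set.Ici 0) x2) :
    x2 < x1 :=
  stmt_1_general u u1 k hderiv h11 h12 y1 y2 hy x1 x2 hx1 hx2 hmax1 hmax2
end

section
/- Under strict submodularity and assumption A3, the observable-consumption quantity exceeds the efficient quantity: x^o > x*. -/
/-- Under strict submodularity (u₁ strictly decreasing in y) and assumption A3,
the observable-consumption quantity exceeds the efficient quantity: x^o > x*. -/
theorem stmt_2 (u1 u2 : ℝ → ℝ → ℝ) (k : ℝ) (hk : 0 < k)
    (h11 : ∀ y, StrictAnti (fun x => u1 x y))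
    (h12 : ∀ x, StrictAnti (fun y => u1 x y))
    (xstar ystar xo : ℝ)
    (hxstar : 0 < xstar) (hystar : 0 < ystar) (hxo : 0 < xo)
    (hfoc1 : u1 xstar ystar = k) (hfoc2 : u2 xstar ystar = k)
    (hfoco : u1 xo 0 = k)
    (hA3 : u2 xo 0 > k) :
    xo > xstar := by
  by_contra h
  push_neg at h
  have h1 : u1 xstar 0 > u1 xstar ystar := h12 xstar hystar
  have h2 : u1 xo 0 ≥ u1 xstar 0 := (h11 0).antitone h
  linarith
end

section
/- If u is strictly submodular and ȳ > 0, then no single point x̄ > 0 can simultaneously be an interior maximizer of x ↦ u(x, ȳ) - kx and of x ↦ u(x, 0) - kx. -/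
/-! A maximizer `x̄ > 0` of `x ↦ u(x, y) - k x` on `[0, ∞)` is interior, so the first-order
condition `u₁(x̄, y) = k` holds there. Being such a maximizer for both `y = ȳ` and `y = 0` would
give `u₁(x̄, ȳ) = k = u₁(x̄, 0)`, contradicting strict decrease of `u₁(x̄, ·)` since `ȳ > 0`. -/

open Set

theorem hasDerivAt_eq_of_isMaxOn_sub_mul_Ici {g : ℝ → ℝ} {g' k a x : ℝ}
    (hmax : IsMaxOn (fun t => g t - k * t) (Ici a) x) (hax : a < x) (hg : HasDerivAt g g' x) :
    g' = k := by
  have hd : HasDerivAt (fun t => g t - k * t) (g' - k) x :=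
    (hg.sub ((hasDerivAt_id' x).const_mul k)).congr_deriv (by ring)
  have := (hmax.isLocalMax (Ici_mem_nhds hax)).hasDerivAt_eq_zero hd
  linarith

theorem stmt_4_general (u u1 : ℝ → ℝ → ℝ) (k : ℝ)
    (hderiv : ∀ y x, HasDerivAt (fun t => u t y) (u1 x y) x)
    (h12 : ∀ x, StrictAnti (fun y => u1 x y))
    (xbar ybar : ℝ) (hxbar : 0 < xbar) (hybar : 0 < ybar) :
    ¬ (IsMaxOn (fun x => u x ybar - k * x) (Set.Ici 0) xbar ∧
       IsMaxOn (fun x => u x 0 - k * x) (Set.Ici 0) xbar) := by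
  rintro ⟨hmax_ybar, hmax_zero⟩
  have h_ybar := hasDerivAt_eq_of_isMaxOn_sub_mul_Ici hmax_ybar hxbar (hderiv ybar xbar)
  have h_zero := hasDerivAt_eq_of_isMaxOn_sub_mul_Ici hmax_zero hxbar (hderiv 0 xbar)
  have hlt : u1 xbar ybar < u1 xbar 0 := h12 xbar hybar
  linarith

/-- If u is strictly submodular (u₁ strictly decreasing in y) and ȳ > 0, then no x̄ > 0 can
simultaneously be a maximizer of x ↦ u(x,ȳ) - kx and of x ↦ u(x,0) - kx on ℝ≥0. -/
theorem stmt_4 (u u1 : ℝ → ℝ → ℝ) (k : ℝ) (hk : 0 < k)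
    (hderiv : ∀ y x, HasDerivAt (fun t => u t y) (u1 x y) x)
    (h12 : ∀ x, StrictAnti (fun y => u1 x y))
    (xbar ybar : ℝ) (hxbar : 0 < xbar) (hybar : 0 < ybar) :
    ¬ (IsMaxOn (fun x => u x ybar - k * x) (Set.Ici 0) xbar ∧
       IsMaxOn (fun x => u x 0 - k * x) (Set.Ici 0) xbar) :=
  stmt_4_general u u1 k hderiv h12 xbar ybar hxbar hybar
end

section
/- Let y1 < y2 and q1, q2 with u(x̃, y1) - q1 = u(x̃, y2) - q2. Define Σ̃(x) = u(x, y1) - q1 - kx for x ≥ x̃ and Σ̃(x) = u(x, y2) - q2 - kx for x < x̃. If u is strictly submodular, then the right derivative of Σ̃ at x̃ strictly exceeds its left derivative, and consequently x̃ is not a local maximizer of Σ̃. -/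
/-!
On `[x̃, ∞)` the function `Σ̃` is the smooth branch `u(·, y1) - q1 - k x`, and by the indifference
condition it agrees with the smooth branch `u(·, y2) - q2 - k x` on `(-∞, x̃]`, so its one-sided
derivatives at `x̃` are those of the two branches. Strict submodularity makes the right derivative
strictly larger than the left one, whereas at a local maximum the right derivative is `≤ 0` and
the left one is `≥ 0`.
-/

open Set

section OneSided

variable {f g h : ℝ → ℝ} {f' g' h' a : ℝ}

theorem IsLocalMax.hasDerivWithinAt_Ici_nonpos (hmax : IsLocalMax f a)
    (hf : HasDerivWithinAt f f' (Ici a) a) : f' ≤ 0 := by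
  have hseg : segment ℝ a (a + 1) ⊆ Ici a :=
    (segment_subset_Icc (by linarith)).trans Icc_subset_Ici_self
  have hone : (1 : ℝ) ∈ posTangentConeAt (Ici a) a := by
    simpa using sub_mem_posTangentConeAt_of_segment_subset hseg
  simpa using (hmax.on _).hasFDerivWithinAt_nonpos hf hone

theorem IsLocalMax.hasDerivWithinAt_Iic_nonneg (hmax : IsLocalMax f a)
    (hf : HasDerivWithinAt f f' (Iic a) a) : 0 ≤ f' := by
  have hseg : segment ℝ a (a - 1) ⊆ Iic a := by
    rw [segment_symm]
    exact (segment_subset_Icc (by linarith)).trans Icc_subset_Iic_self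
  have hneg_one : (-1 : ℝ) ∈ posTangentConeAt (Iic a) a := by
    simpa using sub_mem_posTangentConeAt_of_segment_subset hseg
  simpa using (hmax.on _).hasFDerivWithinAt_nonpos hf hneg_one

theorem not_isLocalMax_of_hasDerivWithinAt_Iic_lt_Ici {fl fr : ℝ}
    (hl : HasDerivWithinAt f fl (Iic a) a) (hr : HasDerivWithinAt f fr (Ici a) a) (hlt : fl < fr) :
    ¬ IsLocalMax f a := fun hmax =>
  ((hmax.hasDerivWithinAt_Iic_nonneg hl).trans_lt hlt).not_ge (hmax.hasDerivWithinAt_Ici_nonpos hr)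

theorem HasDerivWithinAt.ite_lt_Ici (hh : HasDerivWithinAt h h' (Ici a) a) :
    HasDerivWithinAt (fun x => if x < a then g x else h x) h' (Ici a) a :=
  hh.congr_of_mem (fun _ hx => if_neg (not_lt.2 hx)) self_mem_Ici

theorem HasDerivWithinAt.ite_lt_Iic (hg : HasDerivWithinAt g g' (Iic a) a) (hgh : g a = h a) :
    HasDerivWithinAt (fun x => if x < a then g x else h x) g' (Iic a) a := by
  refine hg.congr_of_mem (fun x hx => ?_) self_mem_Iic
  rcases (mem_Iic.1 hx).lt_or_eq with hlt | rfl
  · exact if_pos hlt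
  · exact (if_neg (lt_irrefl x)).trans hgh.symm

end OneSided

theorem stmt_5_general (u u1 : ℝ → ℝ → ℝ) (k : ℝ)
    (hderiv : ∀ y x, HasDerivAt (fun t => u t y) (u1 x y) x)
    (h12 : ∀ x, StrictAnti (fun y => u1 x y))
    (xt y1 y2 q1 q2 : ℝ) (hy : y1 < y2)
    (hindiff : u xt y1 - q1 = u xt y2 - q2) :
    HasDerivWithinAt (fun x => if x < xt then u x y2 - q2 - k * x else u x y1 - q1 - k * x)
        (u1 xt y1 - k) (Set.Ici xt) xt ∧
    HasDerivWithinAt (fun x => if x < xt then u x y2 - q2 - k * x else u x y1 - q1 - k * x)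
        (u1 xt y2 - k) (Set.Iic xt) xt ∧
    u1 xt y2 - k < u1 xt y1 - k ∧
    ¬ IsLocalMax (fun x => if x < xt then u x y2 - q2 - k * x else u x y1 - q1 - k * x) xt := by
  have hbranch (y q : ℝ) : HasDerivAt (fun x => u x y - q - k * x) (u1 xt y - k) xt := by
    exact (((hderiv y xt).sub_const q).sub ((hasDerivAt_id' xt).const_mul k)).congr_deriv
      (by rw [mul_one])
  have hright : HasDerivWithinAt
      (fun x => if x < xt then u x y2 - q2 - k * x else u x y1 - q1 - k * x)
      (u1 xt y1 - k) (Ici xt) xt :=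
    (hbranch y1 q1).hasDerivWithinAt.ite_lt_Ici
  have hleft : HasDerivWithinAt
      (fun x => if x < xt then u x y2 - q2 - k * x else u x y1 - q1 - k * x)
      (u1 xt y2 - k) (Iic xt) xt :=
    (hbranch y2 q2).hasDerivWithinAt.ite_lt_Iic (by rw [hindiff])
  have hlt : u1 xt y2 - k < u1 xt y1 - k := sub_lt_sub_right (h12 xt hy) k
  exact ⟨hright, hleft, hlt, not_isLocalMax_of_hasDerivWithinAt_Iic_lt_Ici hleft hright hlt⟩

/-- With strict submodularity and indifference u(x̃,y1)-q1 = u(x̃,y2)-q2 for y1 < y2,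
the piecewise joint-surplus function Σ̃ has right derivative u₁(x̃,y1)-k at x̃ and left
derivative u₁(x̃,y2)-k, the right derivative strictly exceeds the left derivative, and
x̃ is not a local maximizer of Σ̃. -/
theorem stmt_5 (u u1 : ℝ → ℝ → ℝ) (k : ℝ) (hk : 0 < k)
    (hderiv : ∀ y x, HasDerivAt (fun t => u t y) (u1 x y) x)
    (h12 : ∀ x, StrictAnti (fun y => u1 x y))
    (xt y1 y2 q1 q2 : ℝ) (hxt : 0 < xt) (hy1 : 0 ≤ y1) (hy : y1 < y2)
    (hindiff : u xt y1 - q1 = u xt y2 - q2) :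
    HasDerivWithinAt (fun x => if x < xt then u x y2 - q2 - k * x else u x y1 - q1 - k * x)
        (u1 xt y1 - k) (Set.Ici xt) xt ∧
    HasDerivWithinAt (fun x => if x < xt then u x y2 - q2 - k * x else u x y1 - q1 - k * x)
        (u1 xt y2 - k) (Set.Iic xt) xt ∧
    u1 xt y2 - k < u1 xt y1 - k ∧
    ¬ IsLocalMax (fun x => if x < xt then u x y2 - q2 - k * x else u x y1 - q1 - k * x) xt :=
  stmt_5_general u u1 k hderiv h12 xt y1 y2 q1 q2 hy hindiff
end

section
/- Let ŷ : [a,b] → ℝ≥0 be decreasing, u strictly submodular, and define q(x) = u(x, ŷ(x)) - u(b, 0) + ∫_x^b u_1(z, ŷ(z)) dz. Then for all x, t ∈ [a,b], u(x, ŷ(t)) - q(t) ≤ u(x, ŷ(x)) - q(x); i.e., the direct mechanism (ŷ, q) is incentive compatible. -/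
/-- Incentive compatibility of the direct mechanism (ŷ, q): with ŷ decreasing, u strictly
submodular (u₁ strictly decreasing in y), and q(x) = u(x,ŷ(x)) - u(b,0) + ∫_x^b u₁(z,ŷ(z)) dz,
we have u(x,ŷ(t)) - q(t) ≤ u(x,ŷ(x)) - q(x) for all x,t ∈ [a,b]. -/
theorem stmt_12 (u u1 : ℝ → ℝ → ℝ) (k a b : ℝ) (hab : a < b)
    (yhat q : ℝ → ℝ)
    (hderiv : ∀ y x, HasDerivAt (fun t => u t y) (u1 x y) x)
    (h12 : ∀ x, StrictAnti (fun y => u1 x y))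
    (hymono : AntitoneOn yhat (Set.Icc a b))
    (hy0 : ∀ x ∈ Set.Icc a b, 0 ≤ yhat x)
    (hint : IntervalIntegrable (fun z => u1 z (yhat z)) MeasureTheory.volume a b)
    (hint' : ∀ y, IntervalIntegrable (fun z => u1 z y) MeasureTheory.volume a b)
    (hq : ∀ x, q x = u x (yhat x) - u b 0 + ∫ z in x..b, u1 z (yhat z)) :
    ∀ x ∈ Set.Icc a b, ∀ t ∈ Set.Icc a b,
      u x (yhat t) - q t ≤ u x (yhat x) - q x := by
  intro x hx t ht
  have huIcc : Set.uIcc a b = Set.Icc a b := Set.uIcc_of_le hab.le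
  have hmem : ∀ s ∈ Set.Icc a b, s ∈ Set.uIcc a b := by
    intro s hs; rw [huIcc]; exact hs
  have hsub : ∀ s ∈ Set.Icc a b, ∀ r ∈ Set.Icc a b, Set.uIcc s r ⊆ Set.uIcc a b :=
    fun s hs r hr => Set.uIcc_subset_uIcc (hmem s hs) (hmem r hr)
  have hb : b ∈ Set.Icc a b := Set.right_mem_Icc.mpr hab.le
  have hfint : ∀ s ∈ Set.Icc a b, ∀ r ∈ Set.Icc a b,
      IntervalIntegrable (fun z => u1 z (yhat z)) MeasureTheory.volume s r :=
    fun s hs r hr => hint.mono_set (hsub s hs r hr)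
  have hgint : ∀ y, ∀ s ∈ Set.Icc a b, ∀ r ∈ Set.Icc a b,
      IntervalIntegrable (fun z => u1 z y) MeasureTheory.volume s r :=
    fun y s hs r hr => (hint' y).mono_set (hsub s hs r hr)
  -- FTC: u x (yhat t) - u t (yhat t) = ∫ z in t..x, u1 z (yhat t)
  have hftc : (∫ z in t..x, u1 z (yhat t)) = u x (yhat t) - u t (yhat t) :=
    intervalIntegral.integral_eq_sub_of_hasDerivAt
      (fun z _ => hderiv (yhat t) z) (hgint (yhat t) t ht x hx)
  -- additivity
  have hadd : (∫ z in t..x, u1 z (yhat z)) + (∫ z in x..b, u1 z (yhat z))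
      = ∫ z in t..b, u1 z (yhat z) :=
    intervalIntegral.integral_add_adjacent_intervals (hfint t ht x hx) (hfint x hx b hb)
  -- key inequality: ∫ t..x u1 z (yhat t) ≤ ∫ t..x u1 z (yhat z)
  have hkey : (∫ z in t..x, u1 z (yhat t)) ≤ ∫ z in t..x, u1 z (yhat z) := by
    rcases le_total t x with h | h
    · apply intervalIntegral.integral_mono_on h (hgint (yhat t) t ht x hx) (hfint t ht x hx)
      intro z hz
      have hz' : z ∈ Set.Icc a b := ⟨ht.1.trans hz.1, hz.2.trans hx.2⟩
      exact (h12 z).antitone (hymono ht hz' hz.1)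
    · rw [intervalIntegral.integral_symm x t, intervalIntegral.integral_symm x t
        (f := fun z => u1 z (yhat z))]
      apply neg_le_neg
      apply intervalIntegral.integral_mono_on h (hfint x hx t ht) (hgint (yhat t) x hx t ht)
      intro z hz
      have hz' : z ∈ Set.Icc a b := ⟨hx.1.trans hz.1, hz.2.trans ht.2⟩
      exact (h12 z).antitone (hymono hz' ht hz.2)
  rw [hq x, hq t]
  have := hftc ▸ hkey
  linarith [hadd, this]
end
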